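/- Let L be any finitary first-order language and φ an L-sentence. If there is an L-sentence χ expressing θ*(φ), then there is a universal (Π⁰₁) L-sentence expressing θ*(φ). Hence θ*(φ) is expressible by an L-sentence iff it is expressible by a universal L-sentence. -/

import Mathlib

/-! The sentence `χ` expressing `θ*(φ)` is preserved under substructures: if `M ↪ N ⊨ χ` and
`N ↪ B ⊨ φ`, then `M ↪ B`. By the Łoś–Tarski theorem such a sentence is equivalent to a universal
one. A structure `A` satisfying every universal consequence of `χ` embeds into a model of `χ`:
otherwise, by compactness, finitely many quantifier-free facts about `A` fail in every model of `χ`,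
and their universal negation is a consequence of `χ` that is false in `A`. So `χ` follows from its
universal consequences, by compactness from finitely many of them, and their conjunction is
universal. -/

open FirstOrder Language

universe u v

namespace SatSub

/-- A universal (Π⁰₁) sentence: `∀ x₁ … x_k, ψ` with `ψ` quantifier-free. -/
def IsUniversalSentence {L : FirstOrder.Language.{u, v}} (χ : L.Sentence) : Prop :=
  ∃ (k : ℕ) (ψ : L.BoundedFormula Empty k), ψ.IsQF ∧ χ = ψ.alls

open BoundedFormula

universe w

variable {L : FirstOrder.Language.{u, v}} {α β : Type*} {n : ℕ}

theorem _root_.FirstOrder.Language.BoundedFormula.IsQF.restrictFreeVar [DecidableEq α]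
    {φ : L.BoundedFormula α n} (h : φ.IsQF) (f : φ.freeVarFinset → β) :
    (φ.restrictFreeVar f).IsQF := by
  induction h with
  | falsum => exact isQF_bot
  | of_isAtomic h =>
    cases h with
    | equal => exact (IsAtomic.equal _ _).isQF
    | rel => exact (IsAtomic.rel _ _).isQF
  | imp _ _ ih₁ ih₂ => exact (ih₁ _).imp (ih₂ _)

theorem _root_.FirstOrder.Language.BoundedFormula.IsQF.iInf [Finite β]
    {f : β → L.BoundedFormula α n} (h : ∀ b, (f b).IsQF) : (iInf f).IsQF := by
  let _ := Fintype.ofFinite β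
  suffices ∀ l : List β, ((l.map f).foldr (· ⊓ ·) ⊤).IsQF from this Finset.univ.toList
  intro l
  induction l with
  | nil => exact IsQF.top
  | cons b l ih => exact (h b).inf ih

theorem _root_.FirstOrder.Language.BoundedFormula.IsQF.realize_castLE {M : Type*}
    [L.Structure M] {m : ℕ} {φ : L.BoundedFormula α m} (hφ : φ.IsQF) (h : m ≤ n)
    {v : α → M} {xs : Fin n → M} :
    (φ.castLE h).Realize v xs ↔ φ.Realize v (xs ∘ Fin.castLE h) := by
  induction hφ with
  | falsum => rfl
  | of_isAtomic hA =>
    cases hA with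
    | equal =>
      simp only [Term.bdEqual, castLE, Realize, Term.realize_relabel, Sum.elim_comp_map,
        Function.comp_id]
    | rel =>
      simp only [Relations.boundedFormula, castLE, Realize, Function.comp_apply,
        Term.realize_relabel, Sum.elim_comp_map, Function.comp_id]
  | imp _ _ ih₁ ih₂ => simp only [castLE, realize_imp, ih₁, ih₂]

theorem _root_.FirstOrder.Language.BoundedFormula.IsQF.realize_alls_castLE {M : Type*}
    [L.Structure M] [Nonempty M] {m : ℕ} {φ : L.BoundedFormula α m} (hφ : φ.IsQF) (h : m ≤ n)
    {v : α → M} : (φ.castLE h).alls.Realize v ↔ φ.alls.Realize v := by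
  simp only [realize_alls, hφ.realize_castLE]
  exact (Fin.castLE_injective h).surjective_comp_right.forall.symm

theorem isUniversalSentence_top : IsUniversalSentence (⊤ : L.Sentence) :=
  ⟨0, ⊤, IsQF.top, rfl⟩

theorem isUniversalSentence_iAlls [Finite β] {ψ : L.Formula (Empty ⊕ β)} (hψ : ψ.IsQF) :
    IsUniversalSentence (ψ.iAlls β) :=
  ⟨_, _, hψ.relabel _, rfl⟩

theorem IsUniversalSentence.exists_realize_iff_and {σ₁ σ₂ : L.Sentence}
    (h₁ : IsUniversalSentence σ₁) (h₂ : IsUniversalSentence σ₂) :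
    ∃ σ : L.Sentence, IsUniversalSentence σ ∧
      ∀ (M : Type w) [L.Structure M] [Nonempty M], M ⊨ σ ↔ M ⊨ σ₁ ∧ M ⊨ σ₂ := by
  obtain ⟨k₁, ψ₁, hψ₁, rfl⟩ := h₁
  obtain ⟨k₂, ψ₂, hψ₂, rfl⟩ := h₂
  refine ⟨(ψ₁.castLE (le_max_left k₁ k₂) ⊓ ψ₂.castLE (le_max_right k₁ k₂)).alls,
    ⟨_, _, hψ₁.castLE.inf hψ₂.castLE, rfl⟩, fun M _ _ => ?_⟩
  simp only [Sentence.Realize]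
  rw [← hψ₁.realize_alls_castLE (le_max_left k₁ k₂),
    ← hψ₂.realize_alls_castLE (le_max_right k₁ k₂)]
  simp only [realize_alls, realize_inf, forall_and]

theorem exists_isUniversalSentence_iff_forall_mem (S : Finset L.Sentence)
    (hS : ∀ σ ∈ S, IsUniversalSentence σ) :
    ∃ χ : L.Sentence, IsUniversalSentence χ ∧
      ∀ (M : Type w) [L.Structure M] [Nonempty M], M ⊨ χ ↔ ∀ σ ∈ S, M ⊨ σ := by
  classical
  induction S using Finset.induction_on with
  | empty => exact ⟨⊤, isUniversalSentence_top, fun M _ _ => by simp⟩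
  | insert σ S _ ih =>
    obtain ⟨χ, hχ, hχS⟩ := ih fun τ hτ => hS τ (Finset.mem_insert_of_mem hτ)
    obtain ⟨χ', hχ', hχ'M⟩ := (hS σ (Finset.mem_insert_self σ S)).exists_realize_iff_and hχ
    exact ⟨χ', hχ', fun M _ _ => by rw [hχ'M, hχS, Finset.forall_mem_insert]⟩

theorem nonempty_embedding_of_forall_isQF_realize {A N : Type*} [L.Structure A]
    [L.Structure N] (f : A → N)
    (hf : ∀ φ : L.Formula A, φ.IsQF → φ.Realize id → φ.Realize f) : Nonempty (A ↪[L] N) := by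
  have key : ∀ φ : L.Formula A, φ.IsQF → (φ.Realize f ↔ φ.Realize id) := fun φ hφ =>
    ⟨fun h => by_contra fun h' => Formula.realize_not.1 (hf _ hφ.not (Formula.realize_not.2 h')) h,
      hf φ hφ⟩
  refine ⟨⟨⟨f, fun a b hab => ?_⟩, fun fn x => ?_, fun r x => ?_⟩⟩
  · simpa using (key (Term.equal (var a) (var b)) (IsAtomic.equal _ _).isQF).1 (by simpa using hab)
  · simpa [Function.comp_def] using (key
      (Term.equal (var (Structure.funMap fn x)) (func fn fun i => var (x i)))
      (IsAtomic.equal _ _).isQF).2 (by simp)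
  · simpa [Function.comp_def] using key (r.formula fun i => var (x i)) (IsAtomic.rel _ _).isQF

theorem realize_iAlls_relabel_inr {M : Type*} [L.Structure M] [Finite α] (φ : L.Formula α) :
    M ⊨ (Formula.relabel Sum.inr φ).iAlls α ↔ ∀ v : α → M, φ.Realize v := by
  rw [Sentence.Realize, Formula.realize_iAlls]
  exact forall_congr' fun v => by rw [Formula.realize_relabel]; rfl

def universalConsequences (T : L.Theory) : L.Theory :=
  {σ | IsUniversalSentence σ ∧ T ⊨ᵇ σ}

variable {T : L.Theory}

theorem exists_model_realize_of_isQF_of_finite {A : Type w} [L.Structure A]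
    [A ⊨ universalConsequences T] [Finite α] {φ : L.Formula α} (hφ : φ.IsQF) (a : α → A)
    (ha : φ.Realize a) :
    ∃ (M : Theory.ModelType.{u, v, max u v} T) (w : α → M), φ.Realize w := by
  by_contra! h
  have hTσ : T ⊨ᵇ (Formula.relabel Sum.inr φ.not).iAlls α :=
    Theory.models_sentence_iff.2 fun M => (realize_iAlls_relabel_inr _).2 (h M)
  exact (realize_iAlls_relabel_inr _).1 (Theory.realize_sentence_of_mem (universalConsequences T)
    ⟨isUniversalSentence_iAlls (hφ.not.relabel _), hTσ⟩) a ha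

theorem exists_model_realize_of_isQF {A : Type w} [L.Structure A]
    [A ⊨ universalConsequences T] {φ : L.Formula α} (hφ : φ.IsQF) (a : α → A)
    (ha : φ.Realize a) :
    ∃ (M : Theory.ModelType.{u, v, max u v} T) (w : α → M), φ.Realize w := by
  classical
  obtain ⟨M, w, hw⟩ := exists_model_realize_of_isQF_of_finite (T := T) (hφ.restrictFreeVar id)
    (a ∘ Subtype.val) ((realize_restrictFreeVar (f := id) a fun _ => rfl).2 ha)
  refine ⟨M, fun x => if hx : x ∈ φ.freeVarFinset then w ⟨x, hx⟩ else Classical.arbitrary M, ?_⟩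
  exact (realize_restrictFreeVar _ fun x => by simp).1 hw

theorem exists_model_embedding_of_model_universalConsequences {A : Type w} [L.Structure A]
    [A ⊨ universalConsequences T] :
    ∃ B : Theory.ModelType.{u, v, max u v w} T, Nonempty (A ↪[L] B) := by
  classical
  let Diagram := {φ : L.Formula A // φ.IsQF ∧ φ.Realize id}
  let T' : Diagram → L[[A]].Theory := fun φ =>
    (L.lhomWithConstants A).onTheory T ∪ {Formula.equivSentence φ.1}
  have hT' : Theory.IsSatisfiable (⋃ φ, T' φ) := by
    refine (Theory.isSatisfiable_iUnion_iff_isSatisfiable_iUnion_finset T').2 fun s => ?_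
    let φ₀ : L.Formula A := Formula.iInf fun φ : s => φ.1.1
    have hφ₀ : φ₀.IsQF := IsQF.iInf fun φ => φ.1.2.1
    have hφ₀id : φ₀.Realize id := Formula.realize_iInf.2 fun φ => φ.1.2.2
    obtain ⟨M, w, hMφ₀⟩ := exists_model_realize_of_isQF (T := T) hφ₀ id hφ₀id
    let := constantsOn.structure w
    have : M ⊨ ⋃ φ ∈ s, T' φ := (Theory.model_iff _).2 fun σ hσ => by
      simp only [Set.mem_iUnion] at hσ
      obtain ⟨φ, hφs, hσT | rfl⟩ := hσ
      · have : M ⊨ (L.lhomWithConstants A).onTheory T := (LHom.onTheory_model _ T).2 M.is_model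
        exact Theory.realize_sentence_of_mem _ hσT
      · exact (Formula.realize_equivSentence M φ.1).2 (Formula.realize_iInf.1 hMφ₀ ⟨φ, hφs⟩)
    exact Theory.Model.isSatisfiable M
  obtain ⟨N⟩ := hT'
  have : Nonempty Diagram := ⟨⟨⊤, IsQF.top, by simp⟩⟩
  have : N ⊨ (L.lhomWithConstants A).onTheory T :=
    N.is_model.mono (Set.subset_union_left.trans (Set.subset_iUnion T' (Classical.arbitrary _)))
  let _ : L.Structure N := (L.lhomWithConstants A).reduct N
  refine ⟨(Theory.ModelType.of _ N).reduct (L.lhomWithConstants A), ?_⟩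
  exact nonempty_embedding_of_forall_isQF_realize (fun a => (L.con a : N)) fun φ hφ hid =>
    (Formula.realize_equivSentence N φ).1
      (Theory.realize_sentence_of_mem (⋃ φ, T' φ)
        (Set.mem_iUnion.2 ⟨⟨φ, hφ, hid⟩, Or.inr rfl⟩))

theorem exists_isUniversalSentence_iff_of_preserved_by_embedding (χ : L.Sentence)
    (hχ : ∀ (M N : Type (max u v)) [L.Structure M] [L.Structure N] [Nonempty M],
      (M ↪[L] N) → N ⊨ χ → M ⊨ χ) :
    ∃ χ' : L.Sentence, IsUniversalSentence χ' ∧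
      ∀ (M : Type w) [L.Structure M] [Nonempty M], M ⊨ χ' ↔ M ⊨ χ := by
  have hUχ : universalConsequences {χ} ⊨ᵇ χ := Theory.models_sentence_iff.2 fun M => by
    obtain ⟨B, ⟨e⟩⟩ := exists_model_embedding_of_model_universalConsequences (T := {χ}) (A := M)
    exact hχ M B e (Theory.realize_sentence_of_mem {χ} (Set.mem_singleton χ))
  obtain ⟨U₀, hU₀U, hU₀χ⟩ := Theory.models_iff_finset_models.1 hUχ
  obtain ⟨χ', hχ', hχ'U₀⟩ := exists_isUniversalSentence_iff_forall_mem U₀ fun σ hσ => (hU₀U hσ).1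
  refine ⟨χ', hχ', fun M _ _ => (hχ'U₀ M).trans ⟨fun hM => ?_, fun hM σ hσ => ?_⟩⟩
  · have : M ⊨ (U₀ : L.Theory) := (Theory.model_iff _).2 hM
    exact hU₀χ.realize_sentence M
  · have : M ⊨ ({χ} : L.Theory) := Theory.model_singleton_iff.2 hM
    exact (hU₀U hσ).2.realize_sentence M

theorem thetaStar_expressible_iff_universal
    {L : FirstOrder.Language.{u, v}} (φ : L.Sentence)
    (h : ∃ χ : L.Sentence,
        ∀ (M : Type (max u v)) [L.Structure M] [Nonempty M],
          M ⊨ χ ↔ ∃ (B : Type (max u v)) (_ : L.Structure B),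
            B ⊨ φ ∧ Nonempty (M ↪[L] B)) :
    ∃ χ : L.Sentence, IsUniversalSentence χ ∧
      ∀ (M : Type (max u v)) [L.Structure M] [Nonempty M],
        M ⊨ χ ↔ ∃ (B : Type (max u v)) (_ : L.Structure B),
          B ⊨ φ ∧ Nonempty (M ↪[L] B) := by
  obtain ⟨χ, hχ⟩ := h
  have hχ_embedding : ∀ (M N : Type (max u v)) [L.Structure M] [L.Structure N] [Nonempty M],
      (M ↪[L] N) → N ⊨ χ → M ⊨ χ := by
    intro M N _ _ _ e hN
    have : Nonempty N := ⟨e (Classical.arbitrary M)⟩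
    obtain ⟨B, _, hB, ⟨g⟩⟩ := (hχ N).1 hN
    exact (hχ M).2 ⟨B, _, hB, ⟨g.comp e⟩⟩
  obtain ⟨χ', hχ', hχ'χ⟩ := exists_isUniversalSentence_iff_of_preserved_by_embedding χ hχ_embedding
  exact ⟨χ', hχ', fun M _ _ => (hχ'χ M).trans (hχ M)⟩

end SatSub
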